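/- arXiv:2204.03913 — 8 statements merged into one kernel-verified Lean document; each statement's English description precedes it below -/
import Mathlib

section
/- Let f : ℝⁿ → ℝⁿ be Lipschitz with f(0) = 0, let D ⊆ ℝⁿ be an open set containing 0, and let V : ℝⁿ → ℝ be continuously differentiable with V(0) = 0, V(z) > 0 for all z ∈ D \ {0}, and ⟨∇V(z), f(z)⟩ ≤ 0 for all z ∈ D. Then the origin is a stable equilibrium of ż = f(z): for every ε > 0 with the closed ball of radius ε contained in D, there exists δ > 0 such that every differentiable curve z : [0,∞) → ℝⁿ satisfying z'(t) = f(z(t)) for all t ≥ 0 and ‖z(0)‖ < δ satisfies ‖z(t)‖ < ε for all t ≥ 0. -/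
/-!
Let `m > 0` be the minimum of `V` on the sphere of radius `ε`, and choose `δ` so that `V < m` on
the ball of radius `δ`. A trajectory starting in that ball that ever reached norm `ε` would hit the
sphere at a first time `s`; up to `s` it stays in the closed ball, hence in `D`, where `V` is
nonincreasing along it, so `m ≤ V (z s) ≤ V (z 0) < m`.
-/

open Set Metric

theorem exists_first_eq_of_continuousOn_Icc {g : ℝ → ℝ} {a b c : ℝ} (hab : a ≤ b)
    (hg : ContinuousOn g (Icc a b)) (ha : g a ≤ c) (hb : c ≤ g b) :
    ∃ s ∈ Icc a b, g s = c ∧ ∀ r ∈ Icc a s, g r ≤ c := by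
  set S := Icc a b ∩ g ⁻¹' {c}
  have hS : IsCompact S := isCompact_Icc.of_isClosed_subset
    (hg.preimage_isClosed_of_isClosed isClosed_Icc isClosed_singleton) inter_subset_left
  have hSne : S.Nonempty := intermediate_value_Icc hab hg ⟨ha, hb⟩
  obtain ⟨hsab, hgs⟩ := hS.sInf_mem hSne
  refine ⟨sInf S, hsab, hgs, fun r hr => ?_⟩
  by_contra! hgr
  have hrb : r ≤ b := hr.2.trans hsab.2
  obtain ⟨q, hq, hgq⟩ := intermediate_value_Icc hr.1 (hg.mono (Icc_subset_Icc_right hrb))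
    ⟨ha, hgr.le⟩
  have : sInf S ≤ q := csInf_le hS.bddBelow ⟨⟨hq.1, hq.2.trans hrb⟩, hgq⟩
  have hrs : r = sInf S := le_antisymm hr.2 (this.trans hq.2)
  exact hgr.ne' (hrs ▸ hgs)

theorem le_of_inner_gradient_nonpos {E : Type*} [NormedAddCommGroup E] [InnerProductSpace ℝ E]
    [CompleteSpace E] {V : E → ℝ} (hV : Differentiable ℝ V) {z z' : ℝ → E} {a b : ℝ}
    (hab : a ≤ b) (hz : ∀ s ∈ Icc a b, HasDerivAt z (z' s) s)
    (hdec : ∀ s ∈ Icc a b, inner ℝ (gradient V (z s)) (z' s) ≤ 0) :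
    V (z b) ≤ V (z a) := by
  have hVz : ∀ s ∈ Icc a b, HasDerivAt (V ∘ z) (inner ℝ (gradient V (z s)) (z' s)) s := by
    intro s hs
    rw [inner_gradient_left]
    exact (hV (z s)).hasFDerivAt.comp_hasDerivAt s (hz s hs)
  have hanti : AntitoneOn (V ∘ z) (Icc a b) := by
    refine antitoneOn_of_hasDerivWithinAt_nonpos (convex_Icc a b)
      (f' := fun s => inner ℝ (gradient V (z s)) (z' s))
      (fun s hs => (hVz s hs).continuousAt.continuousWithinAt) (fun s hs => ?_) (fun s hs => ?_)
    all_goals rw [interior_Icc] at hs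
    · exact (hVz s (Ioo_subset_Icc_self hs)).hasDerivWithinAt
    · exact hdec s (Ioo_subset_Icc_self hs)
  exact hanti (left_mem_Icc.mpr hab) (right_mem_Icc.mpr hab) hab

theorem stmt_0_general {n : ℕ}
    (f : EuclideanSpace ℝ (Fin n) → EuclideanSpace ℝ (Fin n))
    (D : Set (EuclideanSpace ℝ (Fin n)))
    (V : EuclideanSpace ℝ (Fin n) → ℝ) (hV : ContDiff ℝ 1 V)
    (hV0 : V 0 = 0)
    (hVpos : ∀ z ∈ D, z ≠ 0 → 0 < V z)
    (hVdot : ∀ z ∈ D, (inner ℝ (gradient V z) (f z) : ℝ) ≤ 0) :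
    ∀ ε > 0, Metric.closedBall (0 : EuclideanSpace ℝ (Fin n)) ε ⊆ D →
      ∃ δ > 0, ∀ z : ℝ → EuclideanSpace ℝ (Fin n),
        (∀ t, 0 ≤ t → HasDerivAt z (f (z t)) t) →
        ‖z 0‖ < δ → ∀ t, 0 ≤ t → ‖z t‖ < ε := by
  intro ε hε hεD
  obtain ⟨m, hm, hVm⟩ := (isCompact_sphere (0 : EuclideanSpace ℝ (Fin n)) ε).exists_forall_le'
    hV.continuous.continuousOn fun x hx => hVpos x (hεD (sphere_subset_closedBall hx))
      (ne_of_mem_sphere hx hε.ne')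
  obtain ⟨δ, hδ, hVδ⟩ := Metric.continuousAt_iff.mp hV.continuous.continuousAt m hm
  refine ⟨min δ ε, lt_min hδ hε, fun z hz hz0 t ht => ?_⟩
  by_contra! hzt
  obtain ⟨s, hs, hzs, hle⟩ := exists_first_eq_of_continuousOn_Icc ht
    (fun r hr => (hz r hr.1).continuousAt.norm.continuousWithinAt)
    (hz0.trans_le (min_le_right δ ε)).le hzt
  have hdecay : V (z s) ≤ V (z 0) :=
    le_of_inner_gradient_nonpos (hV.differentiable one_ne_zero) hs.1 (fun r hr => hz r hr.1)
      fun r hr => hVdot _ (hεD (mem_closedBall_zero_iff.mpr (hle r hr)))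
  have hVz0 : V (z 0) < m := by
    have := hVδ (show dist (z 0) 0 < δ by
      rw [dist_zero_right]; exact hz0.trans_le (min_le_left δ ε))
    rw [hV0, dist_zero_right] at this
    exact (le_abs_self _).trans_lt this
  linarith [hVm (z s) (mem_sphere_zero_iff_norm.mpr hzs)]

/-- **Lyapunov stability.** If `f : ℝⁿ → ℝⁿ` is Lipschitz with `f 0 = 0`, `D` is an open set
containing the origin, and `V` is a continuously differentiable function with `V 0 = 0`,
`V z > 0` on `D \ {0}` and `⟪∇V z, f z⟫ ≤ 0` on `D`, then the origin is a stable equilibrium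
of `ż = f z`. -/
theorem stmt_0 {n : ℕ}
    (f : EuclideanSpace ℝ (Fin n) → EuclideanSpace ℝ (Fin n))
    (K : NNReal) (hf : LipschitzWith K f) (hf0 : f 0 = 0)
    (D : Set (EuclideanSpace ℝ (Fin n))) (hD : IsOpen D)
    (h0D : (0 : EuclideanSpace ℝ (Fin n)) ∈ D)
    (V : EuclideanSpace ℝ (Fin n) → ℝ) (hV : ContDiff ℝ 1 V)
    (hV0 : V 0 = 0)
    (hVpos : ∀ z ∈ D, z ≠ 0 → 0 < V z)
    (hVdot : ∀ z ∈ D, (inner ℝ (gradient V z) (f z) : ℝ) ≤ 0) :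
    ∀ ε > 0, Metric.closedBall (0 : EuclideanSpace ℝ (Fin n)) ε ⊆ D →
      ∃ δ > 0, ∀ z : ℝ → EuclideanSpace ℝ (Fin n),
        (∀ t, 0 ≤ t → HasDerivAt z (f (z t)) t) →
        ‖z 0‖ < δ → ∀ t, 0 ≤ t → ‖z t‖ < ε :=
  stmt_0_general f D V hV hV0 hVpos hVdot
end

section
/- Let f : ℝⁿ → ℝⁿ be Lipschitz with f(0) = 0, let D ⊆ ℝⁿ be an open set containing 0, and let V : ℝⁿ → ℝ be continuously differentiable with V(0) = 0, V(z) > 0 for all z ∈ D \ {0}, and ⟨∇V(z), f(z)⟩ < 0 for all z ∈ D \ {0}. Then the origin is an asymptotically stable equilibrium of ż = f(z): it is stable, and moreover there exists δ₀ > 0 such that every differentiable curve z : [0,∞) → ℝⁿ satisfying z'(t) = f(z(t)) for all t ≥ 0 and ‖z(0)‖ < δ₀ satisfies z(t) → 0 as t → ∞. -/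
/-!
`V` decreases along every solution that stays in `D`. Stability: a solution starting where
`V` is below its minimum `m > 0` on the sphere of radius `ε` could only leave the ball of
radius `ε` through that sphere, where `V ≥ m`. Attractivity: on a compact annulus around the
origin the orbital derivative of `V` is bounded by some `-k < 0`, so no solution stays there
forever (else `V` would become negative); hence a solution trapped in a small closed ball
enters every neighbourhood of the origin, and by stability it then never leaves it.
-/

open Set Filter Topology Metric

lemma exists_first_eq_of_lt_of_le {g : ℝ → ℝ} {a b c : ℝ} (hab : a ≤ b)
    (hg : ContinuousOn g (Icc a b)) (hga : g a < c) (hgb : c ≤ g b) :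
    ∃ t₀ ∈ Icc a b, g t₀ = c ∧ ∀ s ∈ Icc a t₀, g s ≤ c := by
  have hivt : ∀ s ∈ Icc a b, c ≤ g s → ∃ s' ∈ Icc a s, g s' = c := fun s hs hcs =>
    intermediate_value_Icc hs.1 (hg.mono (Icc_subset_Icc_right hs.2)) ⟨hga.le, hcs⟩
  have hS : IsCompact (Icc a b ∩ g ⁻¹' {c}) :=
    isCompact_Icc.of_isClosed_subset
      (hg.preimage_isClosed_of_isClosed isClosed_Icc isClosed_singleton) inter_subset_left
  obtain ⟨s₀, hs₀, hgs₀⟩ := hivt b (right_mem_Icc.2 hab) hgb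
  obtain ⟨t₀, ⟨ht₀, hgt₀⟩, hleast⟩ := hS.exists_isLeast ⟨s₀, hs₀, hgs₀⟩
  refine ⟨t₀, ht₀, hgt₀, fun s hs => ?_⟩
  by_contra! hcs
  have hsb : s ∈ Icc a b := ⟨hs.1, hs.2.trans ht₀.2⟩
  obtain ⟨s', hs', hgs'⟩ := hivt s hsb hcs.le
  have hts' : t₀ ≤ s' := hleast ⟨Icc_subset_Icc_right hsb.2 hs', hgs'⟩
  have hs's : s' = s := le_antisymm hs'.2 (hs.2.trans hts')
  exact hcs.ne' (hs's ▸ hgs')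

section Lyapunov

variable {E : Type*} [NormedAddCommGroup E] [NormedSpace ℝ E]
  {f : E → E} {V : E → ℝ} {z : ℝ → E}

lemma lyapunov_sub_le_mul_sub (hV : Differentiable ℝ V) {a b C : ℝ} (hab : a ≤ b)
    (hz : ∀ t ∈ Icc a b, HasDerivAt z (f (z t)) t)
    (hVdot : ∀ t ∈ Icc a b, fderiv ℝ V (z t) (f (z t)) ≤ C) :
    V (z b) - V (z a) ≤ C * (b - a) := by
  have hVz : ∀ t ∈ Icc a b, HasDerivAt (V ∘ z) (fderiv ℝ V (z t) (f (z t))) t :=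
    fun t ht => (hV (z t)).hasFDerivAt.comp_hasDerivAt t (hz t ht)
  refine (convex_Icc a b).image_sub_le_mul_sub_of_deriv_le
    (fun t ht => (hVz t ht).continuousAt.continuousWithinAt)
    (fun t ht => (hVz t (interior_subset ht)).differentiableAt.differentiableWithinAt)
    (fun t ht => ?_) a (left_mem_Icc.2 hab) b (right_mem_Icc.2 hab) hab
  rw [(hVz t (interior_subset ht)).deriv]
  exact hVdot t (interior_subset ht)

lemma norm_lt_of_lyapunov_lt_sphere (hV : Differentiable ℝ V) {ε m : ℝ}
    (hVdot : ∀ x ∈ closedBall (0 : E) ε, fderiv ℝ V x (f x) ≤ 0)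
    (hm : ∀ x ∈ sphere (0 : E) ε, m ≤ V x)
    (hz : ∀ t, 0 ≤ t → HasDerivAt z (f (z t)) t) (hz0 : ‖z 0‖ < ε) (hVz0 : V (z 0) < m)
    (t : ℝ) (ht : 0 ≤ t) : ‖z t‖ < ε := by
  by_contra! hzt
  obtain ⟨t₀, ht₀, hzt₀, hbefore⟩ := exists_first_eq_of_lt_of_le ht
    (fun s hs => (hz s hs.1).continuousAt.norm.continuousWithinAt) hz0 hzt
  have hdecr := lyapunov_sub_le_mul_sub hV ht₀.1 (fun s hs => hz s hs.1)
    (fun s hs => hVdot _ (mem_closedBall_zero_iff.2 (hbefore s hs)))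
  have hVzt₀ : m ≤ V (z t₀) := hm _ (mem_sphere_zero_iff_norm.2 hzt₀)
  linarith

lemma exists_notMem_of_isCompact (hf : Continuous f) (hV : ContDiff ℝ 1 V) {K : Set E}
    (hK : IsCompact K) (hVK : ∀ x ∈ K, 0 ≤ V x) (hVdot : ∀ x ∈ K, fderiv ℝ V x (f x) < 0)
    (hz : ∀ t, 0 ≤ t → HasDerivAt z (f (z t)) t) : ∃ t, 0 ≤ t ∧ z t ∉ K := by
  by_contra! hzK
  have hVdot_cont : Continuous fun x => -fderiv ℝ V x (f x) :=
    ((hV.continuous_fderiv one_ne_zero).clm_apply hf).neg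
  obtain ⟨k, hk, hkV⟩ := hK.exists_forall_le' hVdot_cont.continuousOn
    fun x hx => neg_pos.2 (hVdot x hx)
  set T := V (z 0) / k + 1
  have hT : 0 ≤ T :=
    (add_pos_of_nonneg_of_pos (div_nonneg (hVK _ (hzK 0 le_rfl)) hk.le) one_pos).le
  have hdecr := lyapunov_sub_le_mul_sub (hV.differentiable one_ne_zero) hT
    (fun s hs => hz s hs.1) fun s hs => le_neg.1 (hkV _ (hzK s hs.1))
  have hkT : k * T = V (z 0) + k := by
    simp only [T, mul_add, mul_div_cancel₀ _ hk.ne', mul_one]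
  linarith [hVK _ (hzK T hT)]

variable [ProperSpace E] {D : Set E}

theorem lyapunov_stable (hV : ContDiff ℝ 1 V) (hV0 : V 0 = 0) (hD : D ∈ 𝓝 0)
    (hVpos : ∀ x ∈ D, x ≠ 0 → 0 < V x) (hVdot : ∀ x ∈ D, fderiv ℝ V x (f x) ≤ 0) :
    ∀ ε > 0, ∃ δ > 0, ∀ z : ℝ → E, (∀ t, 0 ≤ t → HasDerivAt z (f (z t)) t) →
      ‖z 0‖ < δ → ∀ t, 0 ≤ t → ‖z t‖ < ε := by
  intro ε hε
  obtain ⟨r, hr, hrD⟩ := nhds_basis_closedBall.mem_iff.1 hD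
  set ε' := min ε r
  have hε' : 0 < ε' := lt_min hε hr
  have hballD : closedBall (0 : E) ε' ⊆ D :=
    (closedBall_subset_closedBall (min_le_right _ _)).trans hrD
  obtain ⟨m, hm, hmV⟩ := (isCompact_sphere (0 : E) ε').exists_forall_le'
    hV.continuous.continuousOn fun x hx => hVpos x (hballD (sphere_subset_closedBall hx))
      (ne_of_mem_sphere hx hε'.ne')
  obtain ⟨δ, hδ, hδV⟩ := Metric.eventually_nhds_iff_ball.1
    (hV.continuous.continuousAt.eventually (gt_mem_nhds (hV0.symm ▸ hm : V 0 < m)))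
  refine ⟨min δ ε', lt_min hδ hε', fun z hz hz0 t ht => ?_⟩
  exact (norm_lt_of_lyapunov_lt_sphere (hV.differentiable one_ne_zero)
    (fun x hx => hVdot x (hballD hx)) hmV hz (hz0.trans_le (min_le_right _ _))
    (hδV _ (mem_ball_zero_iff.2 (hz0.trans_le (min_le_left _ _)))) t ht).trans_le (min_le_left _ _)

theorem tendsto_zero_of_lyapunov (hf : Continuous f) (hV : ContDiff ℝ 1 V) {r : ℝ}
    (hrD : closedBall (0 : E) r ⊆ D) (hVpos : ∀ x ∈ D, x ≠ 0 → 0 < V x)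
    (hVdot : ∀ x ∈ D, x ≠ 0 → fderiv ℝ V x (f x) < 0)
    (hstable : ∀ ε > 0, ∃ δ > 0, ∀ z : ℝ → E, (∀ t, 0 ≤ t → HasDerivAt z (f (z t)) t) →
      ‖z 0‖ < δ → ∀ t, 0 ≤ t → ‖z t‖ < ε)
    (hz : ∀ t, 0 ≤ t → HasDerivAt z (f (z t)) t) (hzr : ∀ t, 0 ≤ t → ‖z t‖ ≤ r) :
    Tendsto z atTop (𝓝 0) := by
  refine Metric.tendsto_atTop.2 fun ε hε => ?_
  obtain ⟨δ, hδ, hδε⟩ := hstable ε hε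
  have hannulus : ∀ x ∈ closedBall (0 : E) r \ ball 0 δ, x ∈ D ∧ x ≠ 0 := fun x hx =>
    ⟨hrD hx.1, fun h => hx.2 (h ▸ mem_ball_self hδ)⟩
  obtain ⟨t₁, ht₁, hzt₁⟩ := exists_notMem_of_isCompact hf hV
    ((isCompact_closedBall 0 r).diff isOpen_ball)
    (fun x hx => (hVpos x (hannulus x hx).1 (hannulus x hx).2).le)
    (fun x hx => hVdot x (hannulus x hx).1 (hannulus x hx).2) hz
  have hzt₁δ : ‖z t₁‖ < δ := by
    simpa [mem_closedBall_zero_iff, hzr t₁ ht₁] using hzt₁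
  refine ⟨t₁, fun t ht => ?_⟩
  have hshift : ∀ s, 0 ≤ s → HasDerivAt (fun s => z (s + t₁)) (f (z (s + t₁))) s :=
    fun s hs => (hz (s + t₁) (by linarith)).comp_add_const s t₁
  simpa [dist_zero_right] using
    hδε _ hshift (by simpa using hzt₁δ) (t - t₁) (sub_nonneg.2 ht)

end Lyapunov

/-- **Lyapunov asymptotic stability.** If `f : ℝⁿ → ℝⁿ` is Lipschitz with `f 0 = 0`, `D` is an
open set containing the origin, and `V` is continuously differentiable with `V 0 = 0`,
`V z > 0` on `D \ {0}` and `⟪∇V z, f z⟫ < 0` on `D \ {0}`, then the origin is an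
asymptotically stable equilibrium of `ż = f z`: it is stable, and there is `δ₀ > 0` such that
every solution starting with `‖z 0‖ < δ₀` converges to the origin. -/
theorem stmt_1 {n : ℕ}
    (f : EuclideanSpace ℝ (Fin n) → EuclideanSpace ℝ (Fin n))
    (K : NNReal) (hf : LipschitzWith K f) (hf0 : f 0 = 0)
    (D : Set (EuclideanSpace ℝ (Fin n))) (hD : IsOpen D)
    (h0D : (0 : EuclideanSpace ℝ (Fin n)) ∈ D)
    (V : EuclideanSpace ℝ (Fin n) → ℝ) (hV : ContDiff ℝ 1 V)
    (hV0 : V 0 = 0)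
    (hVpos : ∀ z ∈ D, z ≠ 0 → 0 < V z)
    (hVdot : ∀ z ∈ D, z ≠ 0 → (inner ℝ (gradient V z) (f z) : ℝ) < 0) :
    (∀ ε > 0, ∃ δ > 0, ∀ z : ℝ → EuclideanSpace ℝ (Fin n),
        (∀ t, 0 ≤ t → HasDerivAt z (f (z t)) t) →
        ‖z 0‖ < δ → ∀ t, 0 ≤ t → ‖z t‖ < ε) ∧
      ∃ δ₀ > 0, ∀ z : ℝ → EuclideanSpace ℝ (Fin n),
        (∀ t, 0 ≤ t → HasDerivAt z (f (z t)) t) →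
        ‖z 0‖ < δ₀ → Filter.Tendsto z Filter.atTop (nhds 0) := by
  simp only [inner_gradient_left] at hVdot
  have hVdot_nonpos : ∀ x ∈ D, fderiv ℝ V x (f x) ≤ 0 := by
    intro x hx
    rcases eq_or_ne x 0 with rfl | hx0
    · simp [hf0]
    · exact (hVdot x hx hx0).le
  have hstable := lyapunov_stable hV hV0 (hD.mem_nhds h0D) hVpos hVdot_nonpos
  obtain ⟨r, hr, hrD⟩ := nhds_basis_closedBall.mem_iff.1 (hD.mem_nhds h0D)
  obtain ⟨δ₀, hδ₀, htrapped⟩ := hstable r hr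
  exact ⟨hstable, δ₀, hδ₀, fun z hz hz0 => tendsto_zero_of_lyapunov hf.continuous hV hrD
    hVpos hVdot hstable hz fun t ht => (htrapped z hz hz0 t ht).le⟩
end

section
/- Consider ż = f(z,u) with f : ℝ^{n_z} × ℝ^{n_u} → ℝ^{n_z} a polynomial vector field, together with polynomial constraint functions a_{i₁}(z,u) (i₁ = 1,…,N₁), b_{i₂}(z,u) (i₂ = 1,…,N₂), c_{i₃}(z,u) (i₃ = 1,…,N₃), and set D = {(z,u) : a_{i₁}(z,u) ≥ 0 for all i₁ and b_{i₂}(z,u) = 0 for all i₂}. Suppose there exist polynomial functions V : ℝ^{n_z} → ℝ and p_{i₁}, q_{i₂} : ℝ^{n_z} × ℝ^{n_u} → ℝ and constants r_{i₃} ≥ 0 such that: V(0) = 0 and V(z) > 0 for all z ≠ 0 in some neighborhood of 0; p_{i₁}(z,u) ≥ 0 for all (z,u) ∈ D and all i₁; and −∇V(z)·f(z,u) − Σ_{i₁} p_{i₁}(z,u)a_{i₁}(z,u) − Σ_{i₂} q_{i₂}(z,u)b_{i₂}(z,u) − Σ_{i₃} r_{i₃}c_{i₃}(z,u) ≥ 0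 for all (z,u) ∈ ℝ^{n_z} × ℝ^{n_u}. Then the origin is a stable equilibrium for admissible trajectories: for every ε > 0 there exists δ > 0 such that every admissible trajectory with ‖z(0)‖ < δ satisfies ‖z(t)‖ < ε for all t ≥ 0. -/
open MvPolynomial in
private lemma polyContDiff_aux {n : ℕ} (P : MvPolynomial (Fin n) ℝ) :
    ContDiff ℝ (⊤ : ℕ∞) (fun z : EuclideanSpace ℝ (Fin n) => MvPolynomial.eval z P) := by
  let L : EuclideanSpace ℝ (Fin n) →ₗ[ℝ] (Fin n → ℝ) :=
    { toFun := fun x => (x : Fin n → ℝ)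
      map_add' := fun x y => rfl
      map_smul' := fun c x => rfl }
  have h := AnalyticOnNhd.eval_linearMap L P
  exact contDiff_iff_contDiffAt.mpr fun x => ((h x trivial).contDiffAt : ContDiffAt ℝ (⊤ : ℕ∞) _ _)

open MvPolynomial in
private lemma polyCont_aux {n m : ℕ} (P : MvPolynomial (Fin n ⊕ Fin m) ℝ) :
    Continuous (fun x : EuclideanSpace ℝ (Fin n) × EuclideanSpace ℝ (Fin m) =>
      MvPolynomial.eval (Sum.elim x.1 x.2) P) := by
  let L : (EuclideanSpace ℝ (Fin n) × EuclideanSpace ℝ (Fin m)) →ₗ[ℝ] (Fin n ⊕ Fin m → ℝ) :=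
    { toFun := fun x => Sum.elim x.1 x.2
      map_add' := by intro x y; funext s; cases s <;> rfl
      map_smul' := by intro c x; funext s; cases s <;> rfl }
  have h := AnalyticOnNhd.eval_linearMap L P
  exact continuous_iff_continuousAt.mpr fun x => (h x trivial).continuousAt

/-- **Stability of constrained polynomial systems (Papachristodoulou–Prajna).**
For the constrained system `ż = f(z,u)` with polynomial data, if there are polynomial
multipliers `p` (nonnegative on the constraint set `D`), `q`, and nonnegative constants `r`
with `−∇V·f − Σ p·a − Σ q·b − Σ r·c ≥ 0` everywhere, where `V` is polynomial, `V 0 = 0` and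
`V` is positive definite near the origin, then the origin is stable for admissible
trajectories. -/
theorem stmt_2 {nz nu N1 N2 N3 : ℕ}
    (f : EuclideanSpace ℝ (Fin nz) → EuclideanSpace ℝ (Fin nu) → EuclideanSpace ℝ (Fin nz))
    (hf : ∀ i : Fin nz, ∃ P : MvPolynomial (Fin nz ⊕ Fin nu) ℝ,
        ∀ z u, f z u i = MvPolynomial.eval (Sum.elim z u) P)
    (a : Fin N1 → EuclideanSpace ℝ (Fin nz) → EuclideanSpace ℝ (Fin nu) → ℝ)
    (ha : ∀ i, ∃ P : MvPolynomial (Fin nz ⊕ Fin nu) ℝ,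
        ∀ z u, a i z u = MvPolynomial.eval (Sum.elim z u) P)
    (b : Fin N2 → EuclideanSpace ℝ (Fin nz) → EuclideanSpace ℝ (Fin nu) → ℝ)
    (hb : ∀ j, ∃ P : MvPolynomial (Fin nz ⊕ Fin nu) ℝ,
        ∀ z u, b j z u = MvPolynomial.eval (Sum.elim z u) P)
    (c : Fin N3 → EuclideanSpace ℝ (Fin nz) → EuclideanSpace ℝ (Fin nu) → ℝ)
    (hc : ∀ k, ∃ P : MvPolynomial (Fin nz ⊕ Fin nu) ℝ,
        ∀ z u, c k z u = MvPolynomial.eval (Sum.elim z u) P)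
    (V : EuclideanSpace ℝ (Fin nz) → ℝ)
    (hVpoly : ∃ P : MvPolynomial (Fin nz) ℝ, ∀ z, V z = MvPolynomial.eval z P)
    (p : Fin N1 → EuclideanSpace ℝ (Fin nz) → EuclideanSpace ℝ (Fin nu) → ℝ)
    (hppoly : ∀ i, ∃ P : MvPolynomial (Fin nz ⊕ Fin nu) ℝ,
        ∀ z u, p i z u = MvPolynomial.eval (Sum.elim z u) P)
    (q : Fin N2 → EuclideanSpace ℝ (Fin nz) → EuclideanSpace ℝ (Fin nu) → ℝ)
    (hqpoly : ∀ j, ∃ P : MvPolynomial (Fin nz ⊕ Fin nu) ℝ,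
        ∀ z u, q j z u = MvPolynomial.eval (Sum.elim z u) P)
    (r : Fin N3 → ℝ) (hr : ∀ k, 0 ≤ r k)
    (hV0 : V 0 = 0)
    (U : Set (EuclideanSpace ℝ (Fin nz))) (hU : U ∈ nhds 0)
    (hVpos : ∀ z ∈ U, z ≠ 0 → 0 < V z)
    (hp : ∀ z u, (∀ i, 0 ≤ a i z u) → (∀ j, b j z u = 0) → ∀ i, 0 ≤ p i z u)
    (hmain : ∀ z u, 0 ≤ -(inner ℝ (gradient V z) (f z u) : ℝ)
        - ∑ i, p i z u * a i z u - ∑ j, q j z u * b j z u - ∑ k, r k * c k z u) :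
    ∀ ε > 0, ∃ δ > 0,
      ∀ (z : ℝ → EuclideanSpace ℝ (Fin nz)) (u : ℝ → EuclideanSpace ℝ (Fin nu)),
        (∀ t, 0 ≤ t → HasDerivAt z (f (z t) (u t)) t) →
        ContinuousOn u (Set.Ici 0) →
        (∀ t, 0 ≤ t → (∀ i, 0 ≤ a i (z t) (u t)) ∧ (∀ j, b j (z t) (u t) = 0)) →
        (∀ T, 0 ≤ T → ∀ k, 0 ≤ ∫ t in (0:ℝ)..T, c k (z t) (u t)) →
        ‖z 0‖ < δ → ∀ t, 0 ≤ t → ‖z t‖ < ε := by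
  intro ε hε
  -- smoothness of V
  obtain ⟨PV, hPV⟩ := hVpoly
  have hVC : ContDiff ℝ (⊤ : ℕ∞) V := by
    have : V = fun z : EuclideanSpace ℝ (Fin nz) => MvPolynomial.eval z PV := funext hPV
    rw [this]; exact polyContDiff_aux PV
  have hVcont : Continuous V := hVC.continuous
  -- continuity of gradient of V
  have hgradcont : Continuous (fun x => gradient V x) := by
    have h1 : Continuous (fderiv ℝ V) := hVC.continuous_fderiv (by simp)
    exact (InnerProductSpace.toDual ℝ _).symm.continuous.comp h1
  -- continuity of f as a function on the product
  have hfc : Continuous (fun x : EuclideanSpace ℝ (Fin nz) × EuclideanSpace ℝ (Fin nu) =>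
      f x.1 x.2) := by
    have : Continuous (fun x : EuclideanSpace ℝ (Fin nz) × EuclideanSpace ℝ (Fin nu) =>
        (fun i => f x.1 x.2 i : Fin nz → ℝ)) := by
      apply continuous_pi
      intro i
      obtain ⟨P, hP⟩ := hf i
      simpa only [← hP] using polyCont_aux P
    exact (PiLp.continuous_toLp (p := 2) (β := fun _ : Fin nz => ℝ)).comp this
  have hcc : ∀ k, Continuous (fun x : EuclideanSpace ℝ (Fin nz) × EuclideanSpace ℝ (Fin nu) =>
      c k x.1 x.2) := by
    intro k; obtain ⟨P, hP⟩ := hc k; simpa only [← hP] using polyCont_aux P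
  -- case of trivial space
  rcases subsingleton_or_nontrivial (EuclideanSpace ℝ (Fin nz)) with hsub | hnt
  · refine ⟨ε, hε, fun z u _ _ _ _ _ t _ => ?_⟩
    have : z t = 0 := Subsingleton.elim _ _
    simpa [this] using hε
  -- choose ε' with closedBall 0 ε' ⊆ U, 0 < ε' ≤ ε/2
  obtain ⟨ρ, hρ, hball⟩ := (Metric.nhds_basis_closedBall.mem_iff).mp hU
  set ε' : ℝ := min ρ (ε / 2) with hε'def
  have hε'pos : 0 < ε' := lt_min hρ (by linarith)
  have hε'lt : ε' < ε := lt_of_le_of_lt (min_le_right _ _) (by linarith)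
  have hballU : Metric.closedBall (0 : EuclideanSpace ℝ (Fin nz)) ε' ⊆ U :=
    fun x hx => hball (Metric.closedBall_subset_closedBall (min_le_left _ _) hx)
  -- minimum of V on the sphere of radius ε'
  have hSc : IsCompact (Metric.sphere (0 : EuclideanSpace ℝ (Fin nz)) ε') := isCompact_sphere _ _
  have hSne : (Metric.sphere (0 : EuclideanSpace ℝ (Fin nz)) ε').Nonempty :=
    NormedSpace.sphere_nonempty.mpr hε'pos.le
  obtain ⟨w, hwS, hwmin⟩ := hSc.exists_isMinOn hSne hVcont.continuousOn
  set m : ℝ := V w with hmdef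
  have hm : 0 < m := by
    apply hVpos w (hballU (Metric.sphere_subset_closedBall hwS))
    intro hw0
    have : ‖w‖ = ε' := by simpa [Metric.mem_sphere, dist_zero_right] using hwS
    rw [hw0, norm_zero] at this; linarith
  -- choose δ
  have : {x | V x < m} ∈ nhds (0 : EuclideanSpace ℝ (Fin nz)) := by
    have := hVcont.continuousAt (x := 0)
    have h2 : Set.Iio m ∈ nhds (V 0) := by rw [hV0]; exact Iio_mem_nhds hm
    exact this.preimage_mem_nhds h2
  obtain ⟨δ₀, hδ₀, hδball⟩ := Metric.mem_nhds_iff.mp this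
  refine ⟨min δ₀ ε', lt_min hδ₀ hε'pos, fun z u hz hu hD hcint hz0 => ?_⟩
  -- key: V (z T) ≤ V (z 0) for T ≥ 0
  have key : ∀ T, 0 ≤ T → V (z T) ≤ V (z 0) := by
    intro T hT
    set φ : ℝ → ℝ := fun t => (inner ℝ (gradient V (z t)) (f (z t) (u t)) : ℝ) with hφdef
    set ψ : ℝ → ℝ := fun t => -∑ k, r k * c k (z t) (u t) with hψdef
    have hz_cont : ContinuousOn z (Set.Icc 0 T) :=
      fun t ht => ((hz t ht.1).continuousAt).continuousWithinAt
    have hu_cont : ContinuousOn u (Set.Icc 0 T) := hu.mono Set.Icc_subset_Ici_self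
    have htraj : ContinuousOn (fun t => (z t, u t)) (Set.Icc 0 T) := hz_cont.prodMk hu_cont
    have hderiv : ∀ t ∈ Set.uIcc 0 T, HasDerivAt (fun s => V (z s)) (φ t) t := by
      intro t ht
      rw [Set.uIcc_of_le hT] at ht
      have hg : HasGradientAt V (gradient V (z t)) (z t) :=
        (hVC.differentiable (by simp) (z t)).hasGradientAt
      have := hg.hasFDerivAt.comp_hasDerivAt t (hz t ht.1)
      exact this.congr_deriv (by simp [hφdef, InnerProductSpace.toDual_apply_apply])
    have hφcont : ContinuousOn φ (Set.Icc 0 T) :=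
      ((hgradcont.comp_continuousOn hz_cont).inner (hfc.comp_continuousOn htraj))
    have hψcont : ContinuousOn ψ (Set.Icc 0 T) := by
      apply ContinuousOn.neg
      apply continuousOn_finset_sum
      intro k _
      exact continuousOn_const.mul ((hcc k).comp_continuousOn htraj)
    have hφint : IntervalIntegrable φ MeasureTheory.volume 0 T := by
      apply ContinuousOn.intervalIntegrable
      rwa [Set.uIcc_of_le hT]
    have hψint : IntervalIntegrable ψ MeasureTheory.volume 0 T := by
      apply ContinuousOn.intervalIntegrable
      rwa [Set.uIcc_of_le hT]
    have hftc : ∫ t in (0:ℝ)..T, φ t = V (z T) - V (z 0) :=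
      intervalIntegral.integral_eq_sub_of_hasDerivAt hderiv hφint
    have hle : ∀ t ∈ Set.Icc (0:ℝ) T, φ t ≤ ψ t := by
      intro t ht
      have hd := hD t ht.1
      have h1 := hmain (z t) (u t)
      have h2 : 0 ≤ ∑ i, p i (z t) (u t) * a i (z t) (u t) :=
        Finset.sum_nonneg fun i _ =>
          mul_nonneg (hp _ _ hd.1 hd.2 i) (hd.1 i)
      have h3 : ∑ j, q j (z t) (u t) * b j (z t) (u t) = 0 := by
        apply Finset.sum_eq_zero; intro j _; rw [hd.2 j, mul_zero]
      rw [h3] at h1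
      simp only [hφdef, hψdef]
      linarith
    have hmono : ∫ t in (0:ℝ)..T, φ t ≤ ∫ t in (0:ℝ)..T, ψ t :=
      intervalIntegral.integral_mono_on hT hφint hψint hle
    have hψval : ∫ t in (0:ℝ)..T, ψ t ≤ 0 := by
      have heq : ∫ t in (0:ℝ)..T, ψ t
          = -∑ k, r k * ∫ t in (0:ℝ)..T, c k (z t) (u t) := by
        rw [hψdef]
        rw [intervalIntegral.integral_neg]
        congr 1
        rw [intervalIntegral.integral_finset_sum]
        · exact Finset.sum_congr rfl fun k _ => intervalIntegral.integral_const_mul _ _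
        · intro k _
          apply ContinuousOn.intervalIntegrable
          rw [Set.uIcc_of_le hT]
          exact continuousOn_const.mul ((hcc k).comp_continuousOn htraj)
      rw [heq, neg_nonpos]
      exact Finset.sum_nonneg fun k _ => mul_nonneg (hr k) (hcint T hT k)
    linarith [hftc ▸ le_trans hmono hψval]
  -- conclude
  have hz0' : V (z 0) < m := by
    apply hδball
    exact Metric.mem_ball.mpr (by simpa [dist_zero_right] using lt_of_lt_of_le hz0 (min_le_left _ _))
  have hz0ε' : ‖z 0‖ < ε' := lt_of_lt_of_le hz0 (min_le_right _ _)
  intro t ht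
  by_contra hcon
  push_neg at hcon
  have hεt : ε' ≤ ‖z t‖ := le_trans hε'lt.le hcon
  have hzc : ContinuousOn z (Set.Icc 0 t) :=
    fun s hs => ((hz s hs.1).continuousAt).continuousWithinAt
  have hzcont : ContinuousOn (fun s => ‖z s‖) (Set.Icc 0 t) := hzc.norm
  have hmem : ε' ∈ Set.Icc ‖z 0‖ ‖z t‖ := ⟨hz0ε'.le, hεt⟩
  obtain ⟨s, hs, hseq⟩ := intermediate_value_Icc ht hzcont hmem
  have hsS : z s ∈ Metric.sphere (0 : EuclideanSpace ℝ (Fin nz)) ε' := by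
    simp [Metric.mem_sphere, dist_zero_right, hseq]
  have : m ≤ V (z s) := hwmin hsS
  have : V (z s) ≤ V (z 0) := key s hs.1
  linarith
end

section
/- Consider ż = f(z,u) with f : ℝ^{n_z} × ℝ^{n_u} → ℝ^{n_z} polynomial, constraint functions a_{i₁}, b_{i₂}, c_{i₃} polynomial, and D = {(z,u) : a_{i₁}(z,u) ≥ 0 for all i₁ and b_{i₂}(z,u) = 0 for all i₂}. Suppose V : ℝ^{n_z} → ℝ is polynomial, p_{i₁}, q_{i₂} are polynomial with p_{i₁} ≥ 0 on D, r_{i₃} ≥ 0 are constants, and −∇V(z)·f(z,u) − Σ_{i₁} p_{i₁}(z,u)a_{i₁}(z,u) − Σ_{i₂} q_{i₂}(z,u)b_{i₂}(z,u) − Σ_{i₃} r_{i₃}c_{i₃}(z,u) ≥ 0 for all (z,u). Then along every admissible trajectory (z(t),u(t)), V(z(T)) ≤ V(z(0)) for all T ≥ 0. -/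
/-!
Along an admissible trajectory the constraints `a ≥ 0`, `b = 0` and `p ≥ 0` turn the certificate
into the pointwise dissipation inequality `d/dt V(z t) ≤ -∑ r_k c_k(z t, u t)`. Integrating it
from `0` to `T` bounds `V (z T) - V (z 0)` by `-∑ r_k ∫₀ᵀ c_k`, which is `≤ 0` because each
integral constraint holds and `r ≥ 0`.
-/

open MvPolynomial Set MeasureTheory

theorem MvPolynomial.differentiable_eval_ofLp {ι : Type*} [Fintype ι]
    (P : MvPolynomial ι ℝ) :
    Differentiable ℝ (fun x : EuclideanSpace ℝ ι => eval (⇑x) P) := fun x =>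
  (AnalyticOnNhd.eval_continuousLinearMap
    (EuclideanSpace.equiv ι ℝ).toContinuousLinearMap P x trivial).differentiableAt

theorem MvPolynomial.continuousOn_eval_sumElim {α ι κ R : Type*} [TopologicalSpace α]
    [TopologicalSpace R] [CommSemiring R] [IsTopologicalSemiring R]
    (P : MvPolynomial (ι ⊕ κ) R) {x : α → ι → R} {y : α → κ → R} {s : Set α}
    (hx : ContinuousOn x s) (hy : ContinuousOn y s) :
    ContinuousOn (fun t => eval (Sum.elim (x t) (y t)) P) s :=
  (continuous_eval P).comp_continuousOn <| continuousOn_pi.2 <| by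
    rintro (i | j)
    · exact (continuous_apply i).comp_continuousOn hx
    · exact (continuous_apply j).comp_continuousOn hy

theorem sub_le_integral_of_inner_gradient_le {E : Type*} [NormedAddCommGroup E]
    [InnerProductSpace ℝ E] [CompleteSpace E] {W : E → ℝ} (hW : Differentiable ℝ W)
    {z v : ℝ → E} {φ : ℝ → ℝ} {a b : ℝ} (hab : a ≤ b)
    (hz : ∀ t ∈ Icc a b, HasDerivAt z (v t) t) (hφ : IntegrableOn φ (Icc a b))
    (hle : ∀ t ∈ Ioo a b, inner ℝ (gradient W (z t)) (v t) ≤ φ t) :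
    W (z b) - W (z a) ≤ ∫ t in a..b, φ t := by
  refine intervalIntegral.sub_le_integral_of_hasDeriv_right_of_le (g := W ∘ z) hab
    (fun t ht => ?_) (fun t ht => ?_) hφ hle
  · exact (hW _).continuousAt.comp_continuousWithinAt (hz t ht).continuousAt.continuousWithinAt
  · have h := (hW (z t)).hasGradientAt.hasFDerivAt.comp_hasDerivAt t
      (hz t (Ioo_subset_Icc_self ht))
    rw [InnerProductSpace.toDual_apply_apply] at h
    exact h.hasDerivWithinAt

theorem le_neg_sum_of_multiplier_certificate {ι κ μ : Type*} [Fintype ι] [Fintype κ]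
    [Fintype μ] {g : ℝ} {a p : ι → ℝ} {b q : κ → ℝ} {r c : μ → ℝ}
    (h : 0 ≤ -g - ∑ i, p i * a i - ∑ j, q j * b j - ∑ k, r k * c k)
    (ha : ∀ i, 0 ≤ a i) (hp : ∀ i, 0 ≤ p i) (hb : ∀ j, b j = 0) :
    g ≤ -∑ k, r k * c k := by
  have hpa : 0 ≤ ∑ i, p i * a i := Finset.sum_nonneg fun i _ => mul_nonneg (hp i) (ha i)
  have hqb : ∑ j, q j * b j = 0 := Finset.sum_eq_zero fun j _ => by rw [hb j, mul_zero]
  linarith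

theorem stmt_3_general {nz nu N1 N2 N3 : ℕ}
    (f : EuclideanSpace ℝ (Fin nz) → EuclideanSpace ℝ (Fin nu) → EuclideanSpace ℝ (Fin nz))
    (a : Fin N1 → EuclideanSpace ℝ (Fin nz) → EuclideanSpace ℝ (Fin nu) → ℝ)
    (b : Fin N2 → EuclideanSpace ℝ (Fin nz) → EuclideanSpace ℝ (Fin nu) → ℝ)
    (c : Fin N3 → EuclideanSpace ℝ (Fin nz) → EuclideanSpace ℝ (Fin nu) → ℝ)
    (hc : ∀ k, ∃ P : MvPolynomial (Fin nz ⊕ Fin nu) ℝ,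
        ∀ z u, c k z u = MvPolynomial.eval (Sum.elim z u) P)
    (V : EuclideanSpace ℝ (Fin nz) → ℝ)
    (hVpoly : ∃ P : MvPolynomial (Fin nz) ℝ, ∀ z, V z = MvPolynomial.eval z P)
    (p : Fin N1 → EuclideanSpace ℝ (Fin nz) → EuclideanSpace ℝ (Fin nu) → ℝ)
    (q : Fin N2 → EuclideanSpace ℝ (Fin nz) → EuclideanSpace ℝ (Fin nu) → ℝ)
    (r : Fin N3 → ℝ) (hr : ∀ k, 0 ≤ r k)
    (hp : ∀ z u, (∀ i, 0 ≤ a i z u) → (∀ j, b j z u = 0) → ∀ i, 0 ≤ p i z u)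
    (hmain : ∀ z u, 0 ≤ -(inner ℝ (gradient V z) (f z u) : ℝ)
        - ∑ i, p i z u * a i z u - ∑ j, q j z u * b j z u - ∑ k, r k * c k z u) :
    ∀ (z : ℝ → EuclideanSpace ℝ (Fin nz)) (u : ℝ → EuclideanSpace ℝ (Fin nu)),
      (∀ t, 0 ≤ t → HasDerivAt z (f (z t) (u t)) t) →
      ContinuousOn u (Set.Ici 0) →
      (∀ t, 0 ≤ t → (∀ i, 0 ≤ a i (z t) (u t)) ∧ (∀ j, b j (z t) (u t) = 0)) →
      (∀ T, 0 ≤ T → ∀ k, 0 ≤ ∫ t in (0:ℝ)..T, c k (z t) (u t)) →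
      ∀ T, 0 ≤ T → V (z T) ≤ V (z 0) := by
  intro z u hz hu hD hcint T hT
  have hV : Differentiable ℝ V := by
    obtain ⟨P, hP⟩ := hVpoly
    simpa only [← hP] using P.differentiable_eval_ofLp
  have hzc : ContinuousOn z (Ici 0) := fun t ht => (hz t ht).continuousAt.continuousWithinAt
  have hcc : ∀ k, ContinuousOn (fun t => c k (z t) (u t)) (Icc 0 T) := fun k => by
    obtain ⟨P, hP⟩ := hc k
    simp only [hP]
    exact (P.continuousOn_eval_sumElim ((PiLp.continuous_ofLp 2 _).comp_continuousOn hzc)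
      ((PiLp.continuous_ofLp 2 _).comp_continuousOn hu)).mono Icc_subset_Ici_self
  have hdiss := sub_le_integral_of_inner_gradient_le hV hT (fun t ht => hz t ht.1)
    (φ := fun t => -∑ k, r k * c k (z t) (u t))
    ((continuousOn_finsetSum _ fun k _ => (hcc k).const_smul (r k)).neg.integrableOn_compact
      isCompact_Icc)
    fun t ht => by
      obtain ⟨ha, hb⟩ := hD t ht.1.le
      exact le_neg_sum_of_multiplier_certificate (hmain _ _) ha (hp _ _ ha hb) hb
  have hint : ∀ k, IntervalIntegrable (fun t => c k (z t) (u t)) volume 0 T := fun k =>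
    (hcc k).intervalIntegrable_of_Icc hT
  rw [intervalIntegral.integral_neg, intervalIntegral.integral_finsetSum
    fun k _ => (hint k).const_mul (r k)] at hdiss
  simp only [intervalIntegral.integral_const_mul] at hdiss
  have hcost : 0 ≤ ∑ k, r k * ∫ t in (0:ℝ)..T, c k (z t) (u t) :=
    Finset.sum_nonneg fun k _ => mul_nonneg (hr k) (hcint T hT k)
  linarith

/-- **Lyapunov decrease along admissible trajectories.**
For the constrained system `ż = f(z,u)` with polynomial data, if there are polynomial
multipliers `p` (nonnegative on the constraint set `D`), `q`, and nonnegative constants `r`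
with `−∇V·f − Σ p·a − Σ q·b − Σ r·c ≥ 0` everywhere, where `V` is polynomial, then along
every admissible trajectory `V (z T) ≤ V (z 0)` for all `T ≥ 0`. -/
theorem stmt_3 {nz nu N1 N2 N3 : ℕ}
    (f : EuclideanSpace ℝ (Fin nz) → EuclideanSpace ℝ (Fin nu) → EuclideanSpace ℝ (Fin nz))
    (hf : ∀ i : Fin nz, ∃ P : MvPolynomial (Fin nz ⊕ Fin nu) ℝ,
        ∀ z u, f z u i = MvPolynomial.eval (Sum.elim z u) P)
    (a : Fin N1 → EuclideanSpace ℝ (Fin nz) → EuclideanSpace ℝ (Fin nu) → ℝ)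
    (ha : ∀ i, ∃ P : MvPolynomial (Fin nz ⊕ Fin nu) ℝ,
        ∀ z u, a i z u = MvPolynomial.eval (Sum.elim z u) P)
    (b : Fin N2 → EuclideanSpace ℝ (Fin nz) → EuclideanSpace ℝ (Fin nu) → ℝ)
    (hb : ∀ j, ∃ P : MvPolynomial (Fin nz ⊕ Fin nu) ℝ,
        ∀ z u, b j z u = MvPolynomial.eval (Sum.elim z u) P)
    (c : Fin N3 → EuclideanSpace ℝ (Fin nz) → EuclideanSpace ℝ (Fin nu) → ℝ)
    (hc : ∀ k, ∃ P : MvPolynomial (Fin nz ⊕ Fin nu) ℝ,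
        ∀ z u, c k z u = MvPolynomial.eval (Sum.elim z u) P)
    (V : EuclideanSpace ℝ (Fin nz) → ℝ)
    (hVpoly : ∃ P : MvPolynomial (Fin nz) ℝ, ∀ z, V z = MvPolynomial.eval z P)
    (p : Fin N1 → EuclideanSpace ℝ (Fin nz) → EuclideanSpace ℝ (Fin nu) → ℝ)
    (hppoly : ∀ i, ∃ P : MvPolynomial (Fin nz ⊕ Fin nu) ℝ,
        ∀ z u, p i z u = MvPolynomial.eval (Sum.elim z u) P)
    (q : Fin N2 → EuclideanSpace ℝ (Fin nz) → EuclideanSpace ℝ (Fin nu) → ℝ)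
    (hqpoly : ∀ j, ∃ P : MvPolynomial (Fin nz ⊕ Fin nu) ℝ,
        ∀ z u, q j z u = MvPolynomial.eval (Sum.elim z u) P)
    (r : Fin N3 → ℝ) (hr : ∀ k, 0 ≤ r k)
    (hp : ∀ z u, (∀ i, 0 ≤ a i z u) → (∀ j, b j z u = 0) → ∀ i, 0 ≤ p i z u)
    (hmain : ∀ z u, 0 ≤ -(inner ℝ (gradient V z) (f z u) : ℝ)
        - ∑ i, p i z u * a i z u - ∑ j, q j z u * b j z u - ∑ k, r k * c k z u) :
    ∀ (z : ℝ → EuclideanSpace ℝ (Fin nz)) (u : ℝ → EuclideanSpace ℝ (Fin nu)),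
      (∀ t, 0 ≤ t → HasDerivAt z (f (z t) (u t)) t) →
      ContinuousOn u (Set.Ici 0) →
      (∀ t, 0 ≤ t → (∀ i, 0 ≤ a i (z t) (u t)) ∧ (∀ j, b j (z t) (u t) = 0)) →
      (∀ T, 0 ≤ T → ∀ k, 0 ≤ ∫ t in (0:ℝ)..T, c k (z t) (u t)) →
      ∀ T, 0 ≤ T → V (z T) ≤ V (z 0) :=
  stmt_3_general f a b c hc V hVpoly p q r hr hp hmain
end

section
/- Let f : ℝⁿ → ℝⁿ be Lipschitz with f(0) = 0, let D ⊆ ℝⁿ be an open set containing 0, and let V : ℝⁿ → ℝ be continuously differentiable with V(0) = 0, V(z) > 0 for z ∈ D \ {0}, and ⟨∇V(z), f(z)⟩ < 0 for z ∈ D \ {0}. Let γ > 0 be such that the sublevel set S = {z : V(z) ≤ γ} is compact and {z ≠ 0 : V(z) < γ} ⊆ D. Then the strict sublevel set {z : V(z) < γ} is contained in the region of attraction of the origin: every differentiable curve z : [0,∞) → ℝⁿ with z'(t) = f(z(t)) for all t ≥ 0 and V(z(0)) < γ satisfies V(z(t)) < γ for all t ≥ 0 and z(t) → 0 as t → ∞.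 -/
/-!
Along a solution, `t ↦ V (z t)` has derivative `⟪∇V (z t), f (z t)⟫`, which is `≤ 0` as long as
`V (z t) < γ`; a first exit time from `{V < γ}` is therefore impossible, and `V ∘ z` decreases.
The trajectory then stays in the compact set `S = {V ≤ V (z 0)}`. If `V (z t) ≥ ε > 0` for all
`t`, the continuous function `⟪∇V, f⟫` would be `≤ -δ < 0` on the compact set `S ∩ {V ≥ ε}`,
forcing `V (z t) → -∞`; hence `V (z t) → 0`. Every cluster point of `z` lies in `S` and has
`V = 0`, so it is the origin, and compactness of `S` gives `z t → 0`.
-/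

open Set Filter Topology

theorem Convex.antitoneOn_of_hasDerivAt_nonpos {D : Set ℝ} (hD : Convex ℝ D) {f f' : ℝ → ℝ}
    (hf : ∀ x ∈ D, HasDerivAt f (f' x) x) (hf' : ∀ x ∈ interior D, f' x ≤ 0) :
    AntitoneOn f D :=
  antitoneOn_of_hasDerivWithinAt_nonpos hD (fun x hx => (hf x hx).continuousAt.continuousWithinAt)
    (fun x hx => (hf x (interior_subset hx)).hasDerivWithinAt) hf'

section DerivBounds

variable {W W' : ℝ → ℝ}

theorem lt_of_hasDerivAt_nonpos_of_lt {γ : ℝ} (hW : ∀ t, 0 ≤ t → HasDerivAt W (W' t) t)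
    (hW' : ∀ t, 0 ≤ t → W t < γ → W' t ≤ 0) (h0 : W 0 < γ) {t : ℝ} (ht : 0 ≤ t) : W t < γ := by
  by_contra! hγt
  have hcont : ContinuousOn W (Icc 0 t) := fun s hs => (hW s hs.1).continuousAt.continuousWithinAt
  have hexit : IsCompact (Icc 0 t ∩ W ⁻¹' Ici γ) :=
    isCompact_Icc.of_isClosed_subset (hcont.preimage_isClosed_of_isClosed isClosed_Icc isClosed_Ici)
      inter_subset_left
  obtain ⟨t₀, ⟨ht₀, hWt₀⟩, hfirst⟩ :=
    hexit.exists_isMinOn ⟨t, ⟨ht, le_rfl⟩, hγt⟩ continuousOn_id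
  have hbefore : ∀ s ∈ Ico 0 t₀, W s < γ := fun s hs => by
    by_contra! hs'
    exact hs.2.not_ge (hfirst ⟨⟨hs.1, hs.2.le.trans ht₀.2⟩, hs'⟩)
  have hanti : AntitoneOn W (Icc 0 t₀) :=
    (convex_Icc 0 t₀).antitoneOn_of_hasDerivAt_nonpos (fun s hs => hW s hs.1) fun s hs => by
      rw [interior_Icc] at hs
      exact hW' s hs.1.le (hbefore s ⟨hs.1.le, hs.2⟩)
  have := hanti (left_mem_Icc.2 ht₀.1) (right_mem_Icc.2 ht₀.1) ht₀.1
  exact (this.trans_lt h0).not_ge hWt₀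

theorem exists_lt_of_hasDerivAt_le_neg {δ : ℝ} (hδ : 0 < δ)
    (hW : ∀ t, 0 ≤ t → HasDerivAt W (W' t) t) (hW' : ∀ t, 0 ≤ t → W' t ≤ -δ) (c : ℝ) :
    ∃ t, 0 ≤ t ∧ W t < c := by
  set T := (|W 0 - c| + 1) / δ
  have hT : 0 ≤ T := by positivity
  have hanti : AntitoneOn (fun t => W t + δ * t) (Ici 0) :=
    (convex_Ici 0).antitoneOn_of_hasDerivAt_nonpos
      (fun t ht => (hW t ht).add ((hasDerivAt_id t).const_mul δ)) fun t ht => by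
        rw [interior_Ici] at ht
        linarith [hW' t ht.le]
  have hdecay : W T + δ * T ≤ W 0 := by simpa using hanti (mem_Ici.2 le_rfl) hT hT
  have hδT : δ * T = |W 0 - c| + 1 := mul_div_cancel₀ _ hδ.ne'
  exact ⟨T, hT, by linarith [le_abs_self (W 0 - c)]⟩

end DerivBounds

section Convergence

variable {X : Type*} [TopologicalSpace X] {V g : X → ℝ} {K : Set X}

theorem tendsto_comp_zero_of_hasDerivAt_neg {z : ℝ → X} (hK : IsCompact K) (hV : Continuous V)
    (hg : ContinuousOn g K) (hzK : ∀ t, 0 ≤ t → z t ∈ K)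
    (hderiv : ∀ t, 0 ≤ t → HasDerivAt (V ∘ z) (g (z t)) t) (hanti : AntitoneOn (V ∘ z) (Ici 0))
    (hV_nonneg : ∀ x ∈ K, 0 ≤ V x) (hg_neg : ∀ x ∈ K, 0 < V x → g x < 0) :
    Tendsto (V ∘ z) atTop (𝓝 0) := by
  refine tendsto_order.2 ⟨fun a ha => eventually_atTop.2 ⟨0, fun t ht =>
    ha.trans_le (hV_nonneg _ (hzK t ht))⟩, fun ε hε => ?_⟩
  obtain ⟨T, hT, hVT⟩ : ∃ T, 0 ≤ T ∧ V (z T) < ε := by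
    by_contra! hstay
    have hA : IsCompact (K ∩ V ⁻¹' Ici ε) := hK.inter_right (isClosed_Ici.preimage hV)
    have hzA : ∀ t, 0 ≤ t → z t ∈ K ∩ V ⁻¹' Ici ε := fun t ht => ⟨hzK t ht, hstay t ht⟩
    obtain ⟨x, hxA, hxmax⟩ := hA.exists_isMaxOn ⟨z 0, hzA 0 le_rfl⟩ (hg.mono inter_subset_left)
    have hgx : g x < 0 := hg_neg x hxA.1 (hε.trans_le hxA.2)
    obtain ⟨t, ht, hlt⟩ := exists_lt_of_hasDerivAt_le_neg (neg_pos.2 hgx) hderiv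
      (fun t ht => by rw [neg_neg]; exact hxmax (hzA t ht)) ε
    exact hlt.not_ge (hstay t ht)
  filter_upwards [eventually_ge_atTop T] with t ht
  exact (hanti hT (hT.trans ht) ht).trans_lt hVT

theorem tendsto_of_tendsto_comp_zero {Y : Type*} {l : Filter Y} {z : Y → X} {x₀ : X}
    (hK : IsCompact K) (hV : Continuous V) (hV_eq : ∀ x ∈ K, V x = 0 → x = x₀)
    (hzK : ∀ᶠ t in l, z t ∈ K) (hVz : Tendsto (V ∘ z) l (𝓝 0)) : Tendsto z l (𝓝 x₀) :=
  hK.tendsto_nhds_of_unique_mapClusterPt hzK fun x hx hcl =>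
    hV_eq x hx (eq_of_nhds_neBot ((hcl.continuousAt_comp hV.continuousAt).clusterPt.mono hVz))

theorem tendsto_nhds_of_lyapunov {z : ℝ → X} {x₀ : X} (hK : IsCompact K) (hV : Continuous V)
    (hg : ContinuousOn g K) (hzK : ∀ t, 0 ≤ t → z t ∈ K)
    (hderiv : ∀ t, 0 ≤ t → HasDerivAt (V ∘ z) (g (z t)) t) (hanti : AntitoneOn (V ∘ z) (Ici 0))
    (hV₀ : V x₀ = 0) (hpos : ∀ x ∈ K, x ≠ x₀ → 0 < V x ∧ g x < 0) :
    Tendsto z atTop (𝓝 x₀) := by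
  have hV_eq : ∀ x ∈ K, V x = 0 → x = x₀ := fun x hx hVx => by
    by_contra hne
    exact (hpos x hx hne).1.ne' hVx
  have hV_nonneg : ∀ x ∈ K, 0 ≤ V x := fun x hx => by
    rcases eq_or_ne x x₀ with rfl | hne
    · exact hV₀.ge
    · exact (hpos x hx hne).1.le
  have hg_neg : ∀ x ∈ K, 0 < V x → g x < 0 := fun x hx hVx =>
    (hpos x hx (by rintro rfl; exact hVx.ne' hV₀)).2
  exact tendsto_of_tendsto_comp_zero hK hV hV_eq (eventually_atTop.2 ⟨0, hzK⟩)
    (tendsto_comp_zero_of_hasDerivAt_neg hK hV hg hzK hderiv hanti hV_nonneg hg_neg)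

end Convergence

section Gradient

variable {E : Type*} [NormedAddCommGroup E] [InnerProductSpace ℝ E] [CompleteSpace E]

theorem HasGradientAt.comp_hasDerivAt {V : E → ℝ} {v : E} {z : ℝ → E} {z' : E} {t : ℝ}
    (hV : HasGradientAt V v (z t)) (hz : HasDerivAt z z' t) :
    HasDerivAt (V ∘ z) (inner ℝ v z') t :=
  hV.hasFDerivAt.comp_hasDerivAt t hz

theorem ContDiff.continuous_gradient {V : E → ℝ} (hV : ContDiff ℝ 1 V) :
    Continuous (gradient V) :=
  (InnerProductSpace.toDual ℝ E).symm.continuous.comp (hV.continuous_fderiv one_ne_zero)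

end Gradient

theorem stmt_5_general {n : ℕ}
    (f : EuclideanSpace ℝ (Fin n) → EuclideanSpace ℝ (Fin n))
    (K : NNReal) (hf : LipschitzWith K f) (hf0 : f 0 = 0)
    (D : Set (EuclideanSpace ℝ (Fin n)))
    (V : EuclideanSpace ℝ (Fin n) → ℝ) (hV : ContDiff ℝ 1 V)
    (hV0 : V 0 = 0)
    (hVpos : ∀ z ∈ D, z ≠ 0 → 0 < V z)
    (hVdot : ∀ z ∈ D, z ≠ 0 → (inner ℝ (gradient V z) (f z) : ℝ) < 0)
    (γ : ℝ)
    (hcompact : IsCompact {z : EuclideanSpace ℝ (Fin n) | V z ≤ γ})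
    (hsub : {z : EuclideanSpace ℝ (Fin n) | z ≠ 0 ∧ V z < γ} ⊆ D) :
    ∀ z : ℝ → EuclideanSpace ℝ (Fin n),
      (∀ t, 0 ≤ t → HasDerivAt z (f (z t)) t) →
      V (z 0) < γ →
      (∀ t, 0 ≤ t → V (z t) < γ) ∧ Filter.Tendsto z Filter.atTop (nhds 0) := by
  intro z hz hz0
  set g := fun x => inner ℝ (gradient V x) (f x)
  have hderiv : ∀ t, 0 ≤ t → HasDerivAt (V ∘ z) (g (z t)) t := fun t ht =>
    (hV.differentiable one_ne_zero (z t)).hasGradientAt.comp_hasDerivAt (hz t ht)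
  have hg_nonpos : ∀ x, V x < γ → g x ≤ 0 := fun x hx => by
    rcases eq_or_ne x 0 with rfl | hx0
    · simp [g, hf0]
    · exact (hVdot x (hsub ⟨hx0, hx⟩) hx0).le
  have hstay : ∀ t, 0 ≤ t → V (z t) < γ := fun t =>
    lt_of_hasDerivAt_nonpos_of_lt hderiv (fun s _ hs => hg_nonpos _ hs) hz0
  have hanti : AntitoneOn (V ∘ z) (Ici 0) :=
    (convex_Ici 0).antitoneOn_of_hasDerivAt_nonpos hderiv fun t ht =>
      hg_nonpos _ (hstay t (interior_subset ht))
  set S := {x | V x ≤ V (z 0)}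
  have hS : IsCompact S := hcompact.of_isClosed_subset
    (isClosed_le hV.continuous continuous_const) fun x hx => hx.trans hz0.le
  have hzS : ∀ t, 0 ≤ t → z t ∈ S := fun t ht => hanti (mem_Ici.2 le_rfl) ht ht
  have hpos : ∀ x ∈ S, x ≠ 0 → 0 < V x ∧ g x < 0 := fun x hx hx0 =>
    have hxD : x ∈ D := hsub ⟨hx0, hx.trans_lt hz0⟩
    ⟨hVpos x hxD hx0, hVdot x hxD hx0⟩
  exact ⟨hstay, tendsto_nhds_of_lyapunov hS hV.continuous
    (hV.continuous_gradient.inner hf.continuous).continuousOn hzS hderiv hanti hV0 hpos⟩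

/-- **Sublevel sets of a Lyapunov function are inside the region of attraction.**
Let `f` be Lipschitz with `f 0 = 0`, `D` open containing `0`, and `V` continuously
differentiable with `V 0 = 0`, `V > 0` on `D \ {0}` and `⟪∇V, f⟫ < 0` on `D \ {0}`.
If `γ > 0` is such that `{z | V z ≤ γ}` is compact and `{z | z ≠ 0 ∧ V z < γ} ⊆ D`, then
every solution starting in the strict sublevel set `{V < γ}` stays in it and converges to
the origin. -/
theorem stmt_5 {n : ℕ}
    (f : EuclideanSpace ℝ (Fin n) → EuclideanSpace ℝ (Fin n))
    (K : NNReal) (hf : LipschitzWith K f) (hf0 : f 0 = 0)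
    (D : Set (EuclideanSpace ℝ (Fin n))) (hD : IsOpen D)
    (h0D : (0 : EuclideanSpace ℝ (Fin n)) ∈ D)
    (V : EuclideanSpace ℝ (Fin n) → ℝ) (hV : ContDiff ℝ 1 V)
    (hV0 : V 0 = 0)
    (hVpos : ∀ z ∈ D, z ≠ 0 → 0 < V z)
    (hVdot : ∀ z ∈ D, z ≠ 0 → (inner ℝ (gradient V z) (f z) : ℝ) < 0)
    (γ : ℝ) (hγ : 0 < γ)
    (hcompact : IsCompact {z : EuclideanSpace ℝ (Fin n) | V z ≤ γ})
    (hsub : {z : EuclideanSpace ℝ (Fin n) | z ≠ 0 ∧ V z < γ} ⊆ D) :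
    ∀ z : ℝ → EuclideanSpace ℝ (Fin n),
      (∀ t, 0 ≤ t → HasDerivAt z (f (z t)) t) →
      V (z 0) < γ →
      (∀ t, 0 ≤ t → V (z t) < γ) ∧ Filter.Tendsto z Filter.atTop (nhds 0) :=
  stmt_5_general f K hf hf0 D V hV hV0 hVpos hVdot γ hcompact hsub
end

section
/- Let f : ℝ^{n_z} × ℝ^{n_u} → ℝ^{n_z} be polynomial and let π : ℝ^{n_z} → ℝ^{n_u} be a feed-forward fully-connected neural network with continuous activation function φ, with f(0, π(0)) = 0 taking the equilibrium to be the origin. Let x : ℝ^{n_z} → ℝᴺ denote the concatenation of all hidden-layer states (x¹,…,x^ℓ) of the network evaluated at input z, and set X(z) = (x(z), z) ∈ ℝ^{N+n_z}. Suppose g₁,…,g_p and h₁,…,h_q are polynomial functions on ℝ^{N+n_z} abstracting the network, i.e. g_i(X(z)) ≥ 0 and h_j(X(z)) = 0 for all z ∈ ℝ^{n_z} and all i, j. Suppose there exist polynomial functions V : ℝ^{n_z} → ℝ with V(0) = 0, ρ : ℝ^{n_z} → ℝ with ρ(0) = 0 and ρ(z) > 0 for z ≠ 0, s₁,…,s_p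 and t₁,…,t_q on ℝ^{N+n_z}, such that: V − ρ is SOS; each s_i is SOS; and the polynomial function X = (x,z) ↦ −∇V(z)·f(z, W^ℓ x^ℓ + b^ℓ) − Σ_j t_j(X)h_j(X) − Σ_i s_i(X)g_i(X) is SOS, where W^ℓ x^ℓ + b^ℓ is the network output written in terms of the last hidden-layer block x^ℓ of x. Then the origin is a stable equilibrium of the closed loop ż = f(z, π(z)): for every ε > 0 there exists δ > 0 such that every differentiable z : [0,∞) → ℝ^{n_z} with z'(t) = f(z(t), π(z(t))) for all t ≥ 0 and ‖z(0)‖ < δ satisfies ‖z(t)‖ < ε for all t ≥ 0. -/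
/-- The state `xᵏ` of a feed-forward fully-connected neural network with activation `φ`,
layer dimensions `dims`, weights `W` and biases `b`: `x⁰ = z` and
`x^{k+1} = φ (Wᵏ xᵏ + bᵏ)` componentwise. -/
noncomputable def netState (φ : ℝ → ℝ) (dims : ℕ → ℕ)
    (W : ∀ k : ℕ, Matrix (Fin (dims (k + 1))) (Fin (dims k)) ℝ)
    (b : ∀ k : ℕ, Fin (dims (k + 1)) → ℝ) :
    (k : ℕ) → (Fin (dims 0) → ℝ) → Fin (dims k) → ℝ
  | 0, z => z
  | k + 1, z => fun i => φ ((W k).mulVec (netState φ dims W b k z) i + b k i)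

/-- Index type for the joint variable `X = (x, z)` consisting of all hidden-layer states
`x¹, …, x^{L+1}` (layers `ℓ = L + 1`) together with the network input `z`. -/
def NetIdx (dims : ℕ → ℕ) (L : ℕ) : Type :=
  (Σ k : Fin (L + 1), Fin (dims (k.1 + 1))) ⊕ Fin (dims 0)

/-- The concatenation `X(z) = (x(z), z)` of all hidden-layer states with the input. -/
noncomputable def netX (φ : ℝ → ℝ) (dims : ℕ → ℕ)
    (W : ∀ k : ℕ, Matrix (Fin (dims (k + 1))) (Fin (dims k)) ℝ)
    (b : ∀ k : ℕ, Fin (dims (k + 1)) → ℝ) (L : ℕ)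
    (z : Fin (dims 0) → ℝ) : NetIdx dims L → ℝ :=
  Sum.elim (fun s => netState φ dims W b (s.1.1 + 1) z s.2) z

/-- A function `(σ → ℝ) → ℝ` is a polynomial function. -/
def IsPolyFun {σ : Type*} (g : (σ → ℝ) → ℝ) : Prop :=
  ∃ P : MvPolynomial σ ℝ, ∀ x, g x = MvPolynomial.eval x P

/-- A function `(σ → ℝ) → ℝ` is a sum of squares (SOS) of polynomial functions. -/
def IsSOSFun {σ : Type*} (g : (σ → ℝ) → ℝ) : Prop :=
  ∃ (m : ℕ) (r : Fin m → MvPolynomial σ ℝ),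
    ∀ x, g x = ∑ i, (MvPolynomial.eval x (r i)) ^ 2

/-!
Evaluated at the true network state `X(z)`, the multiplier terms `Σ tⱼ hⱼ` vanish and
`Σ sᵢ gᵢ` is nonnegative, so the second SOS certificate forces `∇V(z) · f(z, π z) ≤ 0`:
`V` does not increase along closed-loop trajectories. The first certificate gives `V ≥ ρ`,
and `ρ` is bounded below by some `m > 0` on the compact sphere of radius `ε`. Choosing `δ`
with `V < m` on the `δ`-ball, a trajectory starting there would, by the intermediate value
theorem, have to reach the sphere at a time where `m ≤ ρ ≤ V < m`.
-/

open Metric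

lemma IsSOSFun.nonneg {σ : Type*} {g : (σ → ℝ) → ℝ} (hg : IsSOSFun g) (x : σ → ℝ) : 0 ≤ g x := by
  obtain ⟨m, r, hr⟩ := hg
  rw [hr]
  exact Finset.sum_nonneg fun i _ => sq_nonneg _

lemma IsSOSFun.nonneg_of_certificate {σ ι κ : Type*} [Fintype ι] [Fintype κ]
    {G : (σ → ℝ) → ℝ} {g s : ι → (σ → ℝ) → ℝ} {h t : κ → (σ → ℝ) → ℝ}
    (hcert : IsSOSFun fun X => G X - ∑ j, t j X * h j X - ∑ i, s i X * g i X)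
    (hs : ∀ i, IsSOSFun (s i)) {X : σ → ℝ} (hg : ∀ i, 0 ≤ g i X) (hh : ∀ j, h j X = 0) :
    0 ≤ G X := by
  have hcertX := hcert.nonneg X
  have hh_sum : ∑ j, t j X * h j X = 0 := Finset.sum_eq_zero fun j _ => by rw [hh j, mul_zero]
  have hg_sum : 0 ≤ ∑ i, s i X * g i X :=
    Finset.sum_nonneg fun i _ => mul_nonneg ((hs i).nonneg X) (hg i)
  simp only [hh_sum] at hcertX
  linarith

lemma IsPolyFun.differentiable_of_toLp {ι : Type*} [Fintype ι] {V : EuclideanSpace ℝ ι → ℝ}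
    (hV : IsPolyFun fun z : ι → ℝ => V (WithLp.toLp 2 z)) : Differentiable ℝ V := by
  obtain ⟨P, hP⟩ := hV
  have hV_eq : V = fun w => MvPolynomial.eval (PiLp.continuousLinearEquiv 2 ℝ (fun _ : ι => ℝ) w) P :=
    funext fun w => hP w.ofLp
  rw [hV_eq, ← differentiableOn_univ]
  exact (AnalyticOnNhd.eval_continuousLinearMap
    (PiLp.continuousLinearEquiv 2 ℝ (fun _ : ι => ℝ)).toContinuousLinearMap P).differentiableOn

section Lyapunov

variable {E : Type*} [NormedAddCommGroup E]

lemma exists_pos_le_of_norm_eq [ProperSpace E] {ρ : E → ℝ} (hρ : Continuous ρ)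
    (hρpos : ∀ w, w ≠ 0 → 0 < ρ w) {ε : ℝ} (hε : 0 < ε) :
    ∃ m > 0, ∀ w, ‖w‖ = ε → m ≤ ρ w := by
  rcases (sphere (0 : E) ε).eq_empty_or_nonempty with hempty | hne
  · refine ⟨1, one_pos, fun w hw => ?_⟩
    have : w ∈ sphere (0 : E) ε := mem_sphere_zero_iff_norm.mpr hw
    simp [hempty] at this
  obtain ⟨w₀, hw₀, hmin⟩ := (isCompact_sphere (0 : E) ε).exists_isMinOn hne hρ.continuousOn
  have hw₀_ne : w₀ ≠ 0 := ne_of_mem_sphere hw₀ hε.ne'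
  exact ⟨ρ w₀, hρpos w₀ hw₀_ne, fun w hw => hmin (mem_sphere_zero_iff_norm.mpr hw)⟩

variable [NormedSpace ℝ E]

lemma antitoneOn_comp_of_fderiv_nonpos {F : E → E} {V : E → ℝ} (hV : Differentiable ℝ V)
    (hdecr : ∀ w, fderiv ℝ V w (F w) ≤ 0) {z : ℝ → E}
    (hz : ∀ τ, 0 ≤ τ → HasDerivAt z (F (z τ)) τ) :
    AntitoneOn (V ∘ z) (Set.Ici 0) := by
  have hVz : ∀ τ, 0 ≤ τ → HasDerivAt (V ∘ z) (fderiv ℝ V (z τ) (F (z τ))) τ :=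
    fun τ hτ => (hV (z τ)).hasFDerivAt.comp_hasDerivAt τ (hz τ hτ)
  refine antitoneOn_of_hasDerivWithinAt_nonpos (convex_Ici 0)
    (fun τ hτ => (hVz τ hτ).continuousAt.continuousWithinAt) (fun τ hτ => ?_)
    (fun τ _ => hdecr (z τ))
  rw [interior_Ici] at hτ
  exact (hVz τ hτ.le).hasDerivWithinAt

theorem lyapunov_stable_s6 [ProperSpace E] {F : E → E} {V ρ : E → ℝ} (hV : Differentiable ℝ V)
    (hV0 : V 0 = 0) (hρ : Continuous ρ) (hρpos : ∀ w, w ≠ 0 → 0 < ρ w) (hρV : ∀ w, ρ w ≤ V w)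
    (hdecr : ∀ w, fderiv ℝ V w (F w) ≤ 0) :
    ∀ ε > 0, ∃ δ > 0, ∀ z : ℝ → E, (∀ τ, 0 ≤ τ → HasDerivAt z (F (z τ)) τ) →
      ‖z 0‖ < δ → ∀ τ, 0 ≤ τ → ‖z τ‖ < ε := by
  intro ε hε
  obtain ⟨m, hm, hmρ⟩ := exists_pos_le_of_norm_eq hρ hρpos hε
  obtain ⟨δ, hδ, hVδ⟩ := Metric.continuousAt_iff.mp hV.continuous.continuousAt m hm
  refine ⟨min δ ε, lt_min hδ hε, fun z hz hz0 τ hτ => ?_⟩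
  have hVz0 : V (z 0) < m := by
    have hz0δ : dist (z 0) 0 < δ := by
      rw [dist_zero_right]
      exact hz0.trans_le (min_le_left _ _)
    have hV_near := hVδ hz0δ
    rw [hV0, Real.dist_eq, sub_zero] at hV_near
    exact (le_abs_self _).trans_lt hV_near
  by_contra! hzτ
  obtain ⟨c, hc, hzc⟩ := intermediate_value_Icc hτ
    (fun t ht => (hz t ht.1).continuousAt.norm.continuousWithinAt)
    (show ε ∈ Set.Icc ‖z 0‖ ‖z τ‖ from ⟨(hz0.trans_le (min_le_right _ _)).le, hzτ⟩)
  have hVzc : V (z c) ≤ V (z 0) :=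
    antitoneOn_comp_of_fderiv_nonpos hV hdecr hz Set.self_mem_Ici hc.1 hc.1
  linarith [hmρ (z c) hzc, hρV (z c)]

end Lyapunov

theorem stmt_6_general {nu L p q : ℕ} (dims : ℕ → ℕ) (φ : ℝ → ℝ)
    (W : ∀ k : ℕ, Matrix (Fin (dims (k + 1))) (Fin (dims k)) ℝ)
    (b : ∀ k : ℕ, Fin (dims (k + 1)) → ℝ)
    (Wout : Matrix (Fin nu) (Fin (dims (L + 1))) ℝ) (bout : Fin nu → ℝ)
    (π : EuclideanSpace ℝ (Fin (dims 0)) → EuclideanSpace ℝ (Fin nu))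
    (hπ : ∀ z, π z = fun i => Wout.mulVec (netState φ dims W b (L + 1) z) i + bout i)
    (f : EuclideanSpace ℝ (Fin (dims 0)) → EuclideanSpace ℝ (Fin nu) →
      EuclideanSpace ℝ (Fin (dims 0)))
    (g : Fin p → (NetIdx dims L → ℝ) → ℝ)
    (h : Fin q → (NetIdx dims L → ℝ) → ℝ)
    (hg : ∀ i z, 0 ≤ g i (netX φ dims W b L z))
    (hh : ∀ j z, h j (netX φ dims W b L z) = 0)
    (V : EuclideanSpace ℝ (Fin (dims 0)) → ℝ)
    (hVpoly : IsPolyFun fun z : Fin (dims 0) → ℝ => V (WithLp.toLp 2 z)) (hV0 : V 0 = 0)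
    (ρ : EuclideanSpace ℝ (Fin (dims 0)) → ℝ)
    (hρpoly : IsPolyFun fun z : Fin (dims 0) → ℝ => ρ (WithLp.toLp 2 z))
    (hρpos : ∀ z : EuclideanSpace ℝ (Fin (dims 0)), z ≠ 0 → 0 < ρ z)
    (hVρ : IsSOSFun fun z : Fin (dims 0) → ℝ => V (WithLp.toLp 2 z) - ρ (WithLp.toLp 2 z))
    (s : Fin p → (NetIdx dims L → ℝ) → ℝ) (hs : ∀ i, IsSOSFun (s i))
    (t : Fin q → (NetIdx dims L → ℝ) → ℝ)
    (hmain : IsSOSFun fun X : NetIdx dims L → ℝ =>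
      -(inner ℝ (gradient V (WithLp.toLp 2 fun i => X (Sum.inr i)))
          (f (WithLp.toLp 2 fun i => X (Sum.inr i))
            (WithLp.toLp 2 fun i => Wout.mulVec (fun j => X (Sum.inl ⟨⟨L, Nat.lt_succ_self L⟩, j⟩)) i
              + bout i)) : ℝ)
      - ∑ j, t j X * h j X - ∑ i, s i X * g i X) :
    ∀ ε > 0, ∃ δ > 0, ∀ z : ℝ → EuclideanSpace ℝ (Fin (dims 0)),
      (∀ τ, 0 ≤ τ → HasDerivAt z (f (z τ) (π (z τ))) τ) →
      ‖z 0‖ < δ → ∀ τ, 0 ≤ τ → ‖z τ‖ < ε := by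
  have hdecr : ∀ w, fderiv ℝ V w (f w (π w)) ≤ 0 := by
    intro w
    have hπw : π w = WithLp.toLp 2 fun i => Wout.mulVec
        (fun j => netX φ dims W b L w (Sum.inl ⟨⟨L, Nat.lt_succ_self L⟩, j⟩)) i + bout i :=
      congrArg (WithLp.toLp 2) (hπ w)
    have hcert := hmain.nonneg_of_certificate hs (X := netX φ dims W b L w) (hg · w) (hh · w)
    rw [hπw, ← InnerProductSpace.toDual_symm_apply]
    exact neg_nonneg.mp hcert
  refine lyapunov_stable_s6 hVpoly.differentiable_of_toLp hV0
    hρpoly.differentiable_of_toLp.continuous hρpos (fun w => ?_) hdecr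
  have hVρw := hVρ.nonneg w.ofLp
  simp only at hVρw
  linarith

/-- **SOS certificate for global stability of a neural feedback loop.**
Given a polynomial plant `ż = f(z, u)` in feedback with an `(L+1)`-layer neural network
controller `π`, whose input–output behaviour is abstracted by polynomial constraints
`gᵢ(X(z)) ≥ 0`, `hⱼ(X(z)) = 0`, if there are polynomial `V` (with `V 0 = 0`), a positive
definite polynomial `ρ`, SOS multipliers `sᵢ` and polynomial multipliers `tⱼ` such that
`V − ρ` is SOS and `X ↦ −∇V(z)·f(z, W^ℓ x^ℓ + b^ℓ) − Σⱼ tⱼ(X) hⱼ(X) − Σᵢ sᵢ(X) gᵢ(X)`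
is SOS, then the origin is a stable equilibrium of the closed loop. -/
theorem stmt_6 {nu L p q : ℕ} (dims : ℕ → ℕ) (φ : ℝ → ℝ) (hφ : Continuous φ)
    (W : ∀ k : ℕ, Matrix (Fin (dims (k + 1))) (Fin (dims k)) ℝ)
    (b : ∀ k : ℕ, Fin (dims (k + 1)) → ℝ)
    (Wout : Matrix (Fin nu) (Fin (dims (L + 1))) ℝ) (bout : Fin nu → ℝ)
    (π : EuclideanSpace ℝ (Fin (dims 0)) → EuclideanSpace ℝ (Fin nu))
    (hπ : ∀ z, π z = fun i => Wout.mulVec (netState φ dims W b (L + 1) z) i + bout i)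
    (f : EuclideanSpace ℝ (Fin (dims 0)) → EuclideanSpace ℝ (Fin nu) →
      EuclideanSpace ℝ (Fin (dims 0)))
    (hf : ∀ i : Fin (dims 0), ∃ P : MvPolynomial (Fin (dims 0) ⊕ Fin nu) ℝ,
        ∀ z u, f z u i = MvPolynomial.eval (Sum.elim z u) P)
    (hequil : f 0 (π 0) = 0)
    (g : Fin p → (NetIdx dims L → ℝ) → ℝ) (hgpoly : ∀ i, IsPolyFun (g i))
    (h : Fin q → (NetIdx dims L → ℝ) → ℝ) (hhpoly : ∀ j, IsPolyFun (h j))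
    (hg : ∀ i z, 0 ≤ g i (netX φ dims W b L z))
    (hh : ∀ j z, h j (netX φ dims W b L z) = 0)
    (V : EuclideanSpace ℝ (Fin (dims 0)) → ℝ)
    (hVpoly : IsPolyFun fun z : Fin (dims 0) → ℝ => V (WithLp.toLp 2 z)) (hV0 : V 0 = 0)
    (ρ : EuclideanSpace ℝ (Fin (dims 0)) → ℝ)
    (hρpoly : IsPolyFun fun z : Fin (dims 0) → ℝ => ρ (WithLp.toLp 2 z))
    (hρ0 : ρ 0 = 0) (hρpos : ∀ z : EuclideanSpace ℝ (Fin (dims 0)), z ≠ 0 → 0 < ρ z)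
    (hVρ : IsSOSFun fun z : Fin (dims 0) → ℝ => V (WithLp.toLp 2 z) - ρ (WithLp.toLp 2 z))
    (s : Fin p → (NetIdx dims L → ℝ) → ℝ) (hs : ∀ i, IsSOSFun (s i))
    (t : Fin q → (NetIdx dims L → ℝ) → ℝ) (ht : ∀ j, IsPolyFun (t j))
    (hmain : IsSOSFun fun X : NetIdx dims L → ℝ =>
      -(inner ℝ (gradient V (WithLp.toLp 2 fun i => X (Sum.inr i)))
          (f (WithLp.toLp 2 fun i => X (Sum.inr i))
            (WithLp.toLp 2 fun i => Wout.mulVec (fun j => X (Sum.inl ⟨⟨L, Nat.lt_succ_self L⟩, j⟩)) i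
              + bout i)) : ℝ)
      - ∑ j, t j X * h j X - ∑ i, s i X * g i X) :
    ∀ ε > 0, ∃ δ > 0, ∀ z : ℝ → EuclideanSpace ℝ (Fin (dims 0)),
      (∀ τ, 0 ≤ τ → HasDerivAt z (f (z τ) (π (z τ))) τ) →
      ‖z 0‖ < δ → ∀ τ, 0 ≤ τ → ‖z τ‖ < ε :=
  stmt_6_general dims φ W b Wout bout π hπ f g h hg hh V hVpoly hV0 ρ hρpoly hρpos hVρ s hs t hmain
end

section
/- Let l < 0 < u and set α = min(tanh(l)/l, tanh(u)/u). Then for every x ∈ [l, u], (tanh(x) − αx)(x − tanh(x)) ≥ 0; that is, tanh satisfies the local sector constraint [α, 1] on [l, u]. -/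
/-!
Writing `(tanh x - α x)(x - tanh x) = x² (tanh x / x - α)(1 - tanh x / x)` reduces the claim to
`α ≤ tanh x / x ≤ 1` for `x ≠ 0`. The upper bound is `tanh x ≤ x` on `[0, ∞)`, and the lower bound
holds because `tanh x / x` is even and, by concavity of `tanh` on `[0, ∞)`, decreasing there, so on
`[l, u]` it is smallest at an endpoint.
-/

open Real Set

namespace Real

theorem hasDerivAt_tanh (x : ℝ) : HasDerivAt tanh (1 - tanh x ^ 2) x := by
  have hquot := (hasDerivAt_sinh x).div (hasDerivAt_cosh x) (cosh_pos x).ne'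
  rw [show sinh / cosh = tanh from funext fun y => (tanh_eq_sinh_div_cosh y).symm] at hquot
  refine hquot.congr_deriv ?_
  have := (cosh_pos x).ne'
  rw [tanh_eq_sinh_div_cosh]
  field_simp

theorem continuous_tanh : Continuous tanh :=
  continuous_iff_continuousAt.2 fun x => (hasDerivAt_tanh x).continuousAt

theorem tanh_nonneg {x : ℝ} (hx : 0 ≤ x) : 0 ≤ tanh x := by
  rw [tanh_eq_sinh_div_cosh]
  exact div_nonneg (sinh_nonneg_iff.2 hx) (cosh_pos x).le

theorem tanh_neg_div_neg (x : ℝ) : tanh (-x) / -x = tanh x / x := by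
  rw [tanh_neg, neg_div_neg_eq]

theorem monotone_sub_tanh : Monotone fun x => x - tanh x :=
  monotone_of_hasDerivAt_nonneg (fun x => (hasDerivAt_id x).sub (hasDerivAt_tanh x))
    fun x => by simp only [sub_sub_cancel]; positivity

theorem tanh_le_self {x : ℝ} (hx : 0 ≤ x) : tanh x ≤ x := by
  simpa [tanh_zero] using monotone_sub_tanh hx

theorem tanh_div_self_le_one (x : ℝ) : tanh x / x ≤ 1 := by
  rcases lt_trichotomy x 0 with hx | rfl | hx
  · rw [← tanh_neg_div_neg, div_le_one (neg_pos.2 hx)]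
    exact tanh_le_self (neg_nonneg.2 hx.le)
  · simp
  · exact (div_le_one hx).2 (tanh_le_self hx.le)

theorem concaveOn_tanh : ConcaveOn ℝ (Ici 0) tanh := by
  refine concaveOn_of_hasDerivWithinAt2_nonpos (convex_Ici 0) continuous_tanh.continuousOn
    (fun x _ => (hasDerivAt_tanh x).hasDerivWithinAt)
    (f'' := fun x => -(2 * tanh x * (1 - tanh x ^ 2))) (fun x _ => ?_) fun x hx => ?_
  · refine (((hasDerivAt_tanh x).pow 2).const_sub 1).hasDerivWithinAt.congr_deriv ?_
    simp
  · rw [interior_Ici] at hx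
    have := tanh_nonneg (le_of_lt hx)
    have := tanh_sq_lt_one x
    nlinarith

theorem antitoneOn_tanh_div_self : AntitoneOn (fun x => tanh x / x) (Ioi 0) := by
  intro x hx y hy hxy
  have := concaveOn_tanh.neg.secant_mono self_mem_Ici (mem_Ici.2 (le_of_lt hx))
    (mem_Ici.2 (le_of_lt hy)) hx.ne' hy.ne' hxy
  simpa [tanh_zero, neg_div] using this

end Real

theorem sector_of_div_self_mem_Icc {φ : ℝ → ℝ} {α β x : ℝ} (hφ : φ 0 = 0)
    (h : x ≠ 0 → φ x / x ∈ Icc α β) : 0 ≤ (φ x - α * x) * (β * x - φ x) := by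
  rcases eq_or_ne x 0 with rfl | hx
  · simp [hφ]
  obtain ⟨hα, hβ⟩ := h hx
  have hfactor : (φ x - α * x) * (β * x - φ x) = x ^ 2 * ((φ x / x - α) * (β - φ x / x)) := by
    field_simp
  rw [hfactor]
  exact mul_nonneg (sq_nonneg x) (mul_nonneg (sub_nonneg.2 hα) (sub_nonneg.2 hβ))

/-- **Local sector constraint on tanh from IBP bounds.** For `l < 0 < u` and
`α = min (tanh l / l) (tanh u / u)`, every `x ∈ [l, u]` satisfies
`(tanh x − α x)(x − tanh x) ≥ 0`, i.e. `tanh` lies in the sector `[α, 1]` on `[l, u]`. -/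
theorem stmt_13 (l u : ℝ) (hl : l < 0) (hu : 0 < u)
    (α : ℝ) (hα : α = min (Real.tanh l / l) (Real.tanh u / u)) :
    ∀ x ∈ Set.Icc l u, 0 ≤ (Real.tanh x - α * x) * (x - Real.tanh x) := by
  rintro x ⟨hlx, hxu⟩
  simpa only [one_mul] using sector_of_div_self_mem_Icc (β := 1) tanh_zero fun hx0 => by
    refine ⟨?_, tanh_div_self_le_one x⟩
    rcases hx0.lt_or_gt with hneg | hpos
    · calc α ≤ tanh l / l := hα ▸ min_le_left _ _
        _ = tanh (-l) / -l := (tanh_neg_div_neg l).symm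
        _ ≤ tanh (-x) / -x := antitoneOn_tanh_div_self (neg_pos.2 hneg) (neg_pos.2 hl) (by linarith)
        _ = tanh x / x := tanh_neg_div_neg x
    · calc α ≤ tanh u / u := hα ▸ min_le_right _ _
        _ ≤ tanh x / x := antitoneOn_tanh_div_self hpos hu hxu
end

section
/- Let a < 0 < b with a ≥ −π and b ≤ π, and set α = max((b − sin(b))/b, (a − sin(a))/a). Then for every x ∈ [a, b], letting w = x − sin(x), the sector inequality w(αx − w) ≥ 0 holds. -/
/-!
Writing `x - sin x = x (1 - sinc x)`, the sector quantity equals `x² (1 - sinc x) (α - (1 - sinc x))`,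
and `1 - sinc x ≥ 0` always. So it suffices that `1 - sinc x ≤ α` on `[a, b]`. Since `sinc` is even
and decreasing on `[0, π]` (its derivative has numerator `x cos x - sin x ≤ 0` there), `1 - sinc x`
is bounded by its value at the endpoint on the same side of `0`, which is one of the two terms of `α`.
-/

open Real Set

lemma Real.mul_cos_le_sin {x : ℝ} (hx₀ : 0 ≤ x) (hxπ : x ≤ π) : x * cos x ≤ sin x := by
  rcases le_or_gt (cos x) 0 with hcos | hcos
  · nlinarith [sin_nonneg_of_nonneg_of_le_pi hx₀ hxπ]
  · have hx : x < π / 2 := by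
      by_contra! h
      exact hcos.not_ge (cos_nonpos_of_pi_div_two_le_of_le h (by linarith [pi_pos]))
    have := le_tan hx₀ hx
    rwa [tan_eq_sin_div_cos, le_div_iff₀ hcos] at this

lemma Real.hasDerivAt_sinc_of_ne_zero {x : ℝ} (hx : x ≠ 0) :
    HasDerivAt sinc ((x * cos x - sin x) / x ^ 2) x := by
  have h := (hasDerivAt_sin x).div (hasDerivAt_id x) hx
  simp only [id, mul_one] at h
  refine (h.congr_of_eventuallyEq ?_).congr_deriv (by ring)
  filter_upwards [eventually_ne_nhds hx] with y hy using sinc_of_ne_zero hy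

lemma Real.sinc_antitoneOn : AntitoneOn sinc (Icc 0 π) := by
  apply antitoneOn_of_hasDerivWithinAt_nonpos (convex_Icc 0 π) continuous_sinc.continuousOn
    (fun x hx => by
      rw [interior_Icc] at hx
      exact (hasDerivAt_sinc_of_ne_zero hx.1.ne').hasDerivWithinAt)
  intro x hx
  rw [interior_Icc] at hx
  exact div_nonpos_of_nonpos_of_nonneg (sub_nonpos.2 (mul_cos_le_sin hx.1.le hx.2.le))
    (sq_nonneg x)

lemma Real.sinc_abs (x : ℝ) : sinc |x| = sinc x := by
  rcases abs_choice x with h | h <;> rw [h]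
  exact sinc_neg x

lemma Real.sinc_le_sinc_of_abs_le {x y : ℝ} (hxy : |x| ≤ |y|) (hy : |y| ≤ π) :
    sinc y ≤ sinc x := by
  rw [← sinc_abs x, ← sinc_abs y]
  exact sinc_antitoneOn ⟨abs_nonneg x, hxy.trans hy⟩ ⟨abs_nonneg y, hy⟩ hxy

-- Also true at `x = 0`, where both sides are `0` because `0 / 0 = 0` and `sinc 0 = 1`.
lemma Real.sub_sin_div_self (x : ℝ) : (x - sin x) / x = 1 - sinc x := by
  rcases eq_or_ne x 0 with rfl | hx
  · simp
  · rw [sinc_of_ne_zero hx]; field_simp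

lemma Real.sub_sin_eq_mul_one_sub_sinc (x : ℝ) : x - sin x = x * (1 - sinc x) := by
  rcases eq_or_ne x 0 with rfl | hx
  · simp
  · rw [sinc_of_ne_zero hx]; field_simp

lemma Real.sub_sin_mul_sector_nonneg {x α : ℝ} (hα : 1 - sinc x ≤ α) :
    0 ≤ (x - sin x) * (α * x - (x - sin x)) := by
  have h : (x - sin x) * (α * x - (x - sin x)) = x ^ 2 * ((1 - sinc x) * (α - (1 - sinc x))) := by
    rw [sub_sin_eq_mul_one_sub_sinc]; ring
  rw [h]
  exact mul_nonneg (sq_nonneg x) (mul_nonneg (sub_nonneg.2 (sinc_le_one x)) (sub_nonneg.2 hα))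

theorem stmt_15_general (a b : ℝ)
    (ha' : -Real.pi ≤ a) (hb' : b ≤ Real.pi)
    (α : ℝ) (hα : α = max ((b - Real.sin b) / b) ((a - Real.sin a) / a)) :
    ∀ x ∈ Set.Icc a b, 0 ≤ (x - Real.sin x) * (α * x - (x - Real.sin x)) := by
  rintro x ⟨hax, hxb⟩
  apply sub_sin_mul_sector_nonneg
  rw [hα, sub_sin_div_self, sub_sin_div_self]
  rcases le_total 0 x with hx | hx
  · refine le_max_of_le_left (sub_le_sub_left (sinc_le_sinc_of_abs_le ?_ ?_) 1)
    · exact abs_le.2 ⟨by linarith [abs_nonneg b], by linarith [le_abs_self b]⟩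
    · exact abs_le.2 ⟨by linarith, hb'⟩
  · refine le_max_of_le_right (sub_le_sub_left (sinc_le_sinc_of_abs_le ?_ ?_) 1)
    · exact abs_le.2 ⟨by linarith [neg_abs_le a], by linarith [abs_nonneg a]⟩
    · exact abs_le.2 ⟨ha', by linarith⟩

/-- **Sector constraint on `x − sin x` from interval bounds.** For `−π ≤ a < 0 < b ≤ π`
and `α = max ((b − sin b)/b) ((a − sin a)/a)`, every `x ∈ [a, b]` with `w = x − sin x`
satisfies the sector inequality `w (α x − w) ≥ 0`. -/
theorem stmt_15 (a b : ℝ) (ha : a < 0) (hb : 0 < b)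
    (ha' : -Real.pi ≤ a) (hb' : b ≤ Real.pi)
    (α : ℝ) (hα : α = max ((b - Real.sin b) / b) ((a - Real.sin a) / a)) :
    ∀ x ∈ Set.Icc a b, 0 ≤ (x - Real.sin x) * (α * x - (x - Real.sin x)) :=
  stmt_15_general a b ha' hb' α hα
end
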